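/- The chain recurrent set of the skew-product flow φᵗ equals S¹ ×_g R_c(g), where R_c(g) is the chain recurrent set of the discrete-time flow generated by g. -/

import Mathlib

/-!
Write `Ψ (s, x) = (s̄, g s x)`. Then `φ t (Ψ (s, x)) = Ψ (s + t, x)`, and uniqueness for the
periodic linear ODE gives the cocycle identity `g (s + n) = g s * g 1 ^ n`, so
`Ψ (s + n, x) = Ψ (s, g 1 ^ n x)`: on the fibre over `s̄`, read through `g s`, the integer-time maps
of `φ` are the powers of `g 1`. Hence `g s` pushes chains of `g 1` through `z` forward to chains of
`φ` through `Ψ (s, z)`. Conversely, lift the circle coordinates of a `φ`-chain through `Ψ (s, z)`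
to `[s - 1/2, s + 1/2]`; each jump of length `T` then becomes a step `x ↦ g 1 ^ n x` up to an error
governed by the continuity of `(u, w) ↦ (g u)⁻¹ w`. Compactness of `[s - 1, s + 1]` and a partition
of unity turn this into a continuous positive tolerance on `F`, as continuous `ε` require.
-/

/-- An `(ε, S)`-chain from `x` to `y` for `σ`, with respect to the distance function `d`. -/
def IsChainFrom {U T : Type*} (d : U → U → ℝ) (σ : T → U → U) (S : Set T)
    (ε : U → ℝ) (x y : U) : Prop :=
  ∃ k : ℕ, ∃ ts : Fin (k + 1) → T, ∃ xs : Fin (k + 2) → U,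
    xs 0 = x ∧ xs (Fin.last (k + 1)) = y ∧ (∀ i, ts i ∈ S) ∧
    ∀ i : Fin (k + 1),
      d (xs i.succ) (σ (ts i) (xs i.castSucc)) < ε (σ (ts i) (xs i.castSucc))

open Set Metric Function

theorem continuous_of_mul_eq_one {X R : Type*} [TopologicalSpace X] [NormedRing R]
    [HasSummableGeomSeries R] {f f' : X → R} (hf : Continuous f)
    (h : ∀ x, f x * f' x = 1 ∧ f' x * f x = 1) : Continuous f' := by
  let u : X → Rˣ := fun x => ⟨f x, f' x, (h x).1, (h x).2⟩
  have hf' : f' = fun x => Ring.inverse (f x) := funext fun x => (Ring.inverse_unit (u x)).symm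
  rw [hf', continuous_iff_continuousAt]
  exact fun x => ContinuousAt.comp (f := f) (NormedRing.inverse_continuousAt (u x)) hf.continuousAt

theorem fundamental_solution_add_period {E : Type*} [NormedAddCommGroup E] [NormedSpace ℝ E]
    {X g : ℝ → E →L[ℝ] E} {c : ℝ} (hX : Continuous X) (hper : Periodic X c) (hg0 : g 0 = 1)
    (hg : ∀ t, HasDerivAt g (X t ∘L g t) t) (τ : ℝ) : g (τ + c) = g τ * g c := by
  rcases eq_or_ne c 0 with rfl | hc
  · simp [hg0]
  obtain ⟨C, hC⟩ := isBounded_iff_forall_norm_le.1 (hper.isBounded_of_continuous hc hX)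
  -- both sides solve `A' = X t ∘L A`, whose right-hand side is `C`-Lipschitz in `A`
  have hlip : ∀ t, LipschitzWith C.toNNReal fun A : E →L[ℝ] E => X t ∘L A := fun t =>
    LipschitzWith.of_dist_le_mul fun A B => by
      rw [dist_eq_norm, dist_eq_norm, ← ContinuousLinearMap.comp_sub, Real.coe_toNNReal _
        ((norm_nonneg _).trans (hC _ (mem_range_self t)))]
      exact (ContinuousLinearMap.opNorm_comp_le _ _).trans
        (mul_le_mul_of_nonneg_right (hC _ (mem_range_self t)) (norm_nonneg _))
  have key := ODE_solution_unique_univ (s := fun _ => univ) (t₀ := 0)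
    (fun t => (hlip t).lipschitzOnWith (s := univ))
    (f := fun τ => g (τ + c)) (g := fun τ => g τ * g c)
    (fun t => ⟨by simpa [hper t] using (hg (t + c)).comp_add_const t c, trivial⟩)
    (fun t => ⟨by simpa [ContinuousLinearMap.mul_def, ContinuousLinearMap.comp_assoc] using
      (hg t).clm_comp (hasDerivAt_const t (g c)), trivial⟩)
    (by simp [hg0])
  exact congrFun key τ

theorem fundamental_solution_add_nat_mul {E : Type*} [NormedAddCommGroup E] [NormedSpace ℝ E]
    {X g : ℝ → E →L[ℝ] E} {c : ℝ} (hX : Continuous X) (hper : Periodic X c) (hg0 : g 0 = 1)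
    (hg : ∀ t, HasDerivAt g (X t ∘L g t) t) (τ : ℝ) (n : ℕ) : g (τ + n * c) = g τ * g c ^ n := by
  induction n with
  | zero => simp
  | succ n ih =>
    rw [Nat.cast_succ, add_one_mul, ← add_assoc, fundamental_solution_add_period hX hper hg0 hg,
      ih, pow_succ, mul_assoc]

theorem IsCompact.exists_continuous_pos_forall_dist_lt {S E Y : Type*} [PseudoMetricSpace S]
    [PseudoMetricSpace E] [PseudoMetricSpace Y] {K : Set S} (hK : IsCompact K) {h : S → E → Y}
    (hh : Continuous (uncurry h)) {ε : Y → ℝ} (hε : Continuous ε) (hε0 : ∀ y, 0 < ε y) :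
    ∃ δ : E → ℝ, Continuous δ ∧ (∀ w, 0 < δ w) ∧ ∀ w w' u τ, u ∈ K → τ ∈ K →
      dist τ u < δ w → dist w' w < δ w → dist (h τ w') (h u w) < ε (h u w) := by
  let admissible : E → Set ℝ := fun w => {δ | 0 < δ ∧ ∀ w' u τ, u ∈ K → τ ∈ K →
      dist τ u < δ → dist w' w < δ → dist (h τ w') (h u w) < ε (h u w)}
  have hconvex : ∀ w, Convex ℝ (admissible w) := fun w => OrdConnected.convex
    ⟨fun δ₁ h₁ δ₂ h₂ δ hδ => ⟨h₁.1.trans_le hδ.1, fun w' u τ hu hτ hτu hw' =>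
      h₂.2 w' u τ hu hτ (hτu.trans_le hδ.2) (hw'.trans_le hδ.2)⟩⟩
  let O : Set (S × S × E × E) := {p | dist (h p.1 p.2.2.1) (h p.2.1 p.2.2.2) < ε (h p.2.1 p.2.2.2)}
  have hO : IsOpen O := by
    have h₁ : Continuous fun p : S × S × E × E => h p.1 p.2.2.1 :=
      hh.comp (f := fun p : S × S × E × E => (p.1, p.2.2.1)) (by fun_prop)
    have h₂ : Continuous fun p : S × S × E × E => h p.2.1 p.2.2.2 :=
      hh.comp (f := fun p : S × S × E × E => (p.2.1, p.2.2.2)) (by fun_prop)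
    exact isOpen_lt (h₁.dist h₂) (hε.comp h₂)
  have hlocal : ∀ w₀ : E, ∃ δ : ℝ, ∀ᶠ w in nhds w₀, δ ∈ admissible w := by
    intro w₀
    let diag := (fun u => (u, u, w₀, w₀)) '' K
    obtain ⟨r, hr, hrO⟩ := (hK.image (by fun_prop) : IsCompact diag).exists_thickening_subset_open
      hO (by rintro _ ⟨u, -, rfl⟩; simpa [O] using hε0 _)
    -- for `w` within `r / 2` of `w₀`, each admissible `(τ, u, w', w)` is `r`-close to `diag`
    refine ⟨r / 2, Filter.mem_of_superset (ball_mem_nhds w₀ (half_pos hr))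
      fun w hw => ⟨half_pos hr, fun w' u τ hu _ hτu hw' => @hrO (τ, u, w', w) ?_⟩⟩
    rw [mem_ball] at hw
    refine mem_thickening_iff.2 ⟨_, mem_image_of_mem _ hu, ?_⟩
    simp only [Prod.dist_eq, dist_self]
    have := dist_triangle w' w w₀
    exact max_lt (by linarith) (max_lt hr (max_lt (by linarith) (by linarith)))
  obtain ⟨δ, hδ⟩ := exists_continuous_forall_mem_convex_of_local_const hconvex hlocal
  exact ⟨δ, δ.continuous, fun w => (hδ w).1, fun w => (hδ w).2⟩

theorem UnitAddCircle.coe_add_natCast (s : ℝ) (n : ℕ) :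
    ((s + n : ℝ) : UnitAddCircle) = s := by
  rw [AddCircle.coe_add, ← nsmul_one, AddCircle.coe_nsmul, AddCircle.coe_period, smul_zero,
    add_zero]

def ChainRecurrent {U T : Type*} [TopologicalSpace U] (d : U → U → ℝ) (σ : T → U → U)
    (time : T → ℝ) (x : U) : Prop :=
  ∀ ε : U → ℝ, Continuous ε → (∀ u, 0 < ε u) → ∀ t : ℝ, 0 < t →
    IsChainFrom d σ {r | t < time r} ε x x

section SkewProduct

variable {F : Type*} [NormedAddCommGroup F] [NormedSpace ℝ F] {g ginv : ℝ → F →L[ℝ] F}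
  {φ : ℝ → UnitAddCircle × F → UnitAddCircle × F}

theorem skewProduct_apply_coe_apply (hleft : ∀ u x, ginv u (g u x) = x)
    (hφ : ∀ (t s : ℝ) (x : F),
      φ t ((s : UnitAddCircle), x) = (((s + t : ℝ) : UnitAddCircle), g (t + s) (ginv s x)))
    (t s : ℝ) (x : F) :
    φ t ((s : UnitAddCircle), g s x) = (((s + t : ℝ) : UnitAddCircle), g (s + t) x) := by
  rw [hφ, hleft, add_comm t]

theorem chainRecurrent_skewProduct_of_chainRecurrent
    (hcoc : ∀ u (n : ℕ), g (u + n) = g u * g 1 ^ n) (hleft : ∀ u x, ginv u (g u x) = x)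
    (hφ : ∀ (t s : ℝ) (x : F),
      φ t ((s : UnitAddCircle), x) = (((s + t : ℝ) : UnitAddCircle), g (t + s) (ginv s x)))
    {z : F} (hz : ChainRecurrent (fun x y => ‖x - y‖) (fun (n : ℕ) x => (g 1 ^ n) x)
      (fun n => (n : ℝ)) z) (s : ℝ) :
    ChainRecurrent (fun p q => dist p.1 q.1 + ‖p.2 - q.2‖) φ (fun r => r)
      ((s : UnitAddCircle), g s z) := by
  intro ε hε hε0 t ht
  set M := ‖g s‖ + 1
  have hM : 0 < M := by positivity
  obtain ⟨k, ns, xs, h0, hlast, hns, hstep⟩ :=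
    hz (fun x => ε ((s : UnitAddCircle), g s x) / M) (by fun_prop) (fun _ => div_pos (hε0 _) hM)
      t ht
  refine ⟨k, fun i => ns i, fun i => ((s : UnitAddCircle), g s (xs i)), by simp [h0],
    by simp [hlast], hns, fun i => ?_⟩
  have hflow : φ (ns i) ((s : UnitAddCircle), g s (xs i.castSucc)) =
      ((s : UnitAddCircle), g s ((g 1 ^ ns i) (xs i.castSucc))) := by
    rw [skewProduct_apply_coe_apply hleft hφ, hcoc, UnitAddCircle.coe_add_natCast]
    rfl
  beta_reduce
  rw [hflow, dist_self, zero_add, ← map_sub]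
  calc ‖g s (xs i.succ - (g 1 ^ ns i) (xs i.castSucc))‖
      ≤ M * ‖xs i.succ - (g 1 ^ ns i) (xs i.castSucc)‖ :=
        ((g s).le_opNorm _).trans (by gcongr; linarith)
    _ < M * (ε ((s : UnitAddCircle), g s ((g 1 ^ ns i) (xs i.castSucc))) / M) := by
        gcongr; exact hstep i
    _ = _ := mul_div_cancel₀ _ hM.ne'

theorem exists_chain_step_of_skewProduct_step
    (hcoc : ∀ u (n : ℕ), g (u + n) = g u * g 1 ^ n) (hleft : ∀ u x, ginv u (g u x) = x)
    {s t T ρ ρ' : ℝ} (hρ : ρ ∈ Icc (s - 1 / 2) (s + 1 / 2))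
    (hρ' : ρ' ∈ Icc (s - 1 / 2) (s + 1 / 2))
    (ht : 0 ≤ t) (hT : t + 2 < T) {δ ε : F → ℝ}
    (hδ : ∀ w w' u τ, u ∈ Icc (s - 1) (s + 1) → τ ∈ Icc (s - 1) (s + 1) →
      dist τ u < δ w → dist w' w < δ w → dist (ginv τ w') (ginv u w) < ε (ginv u w))
    {x w : F}
    (hstep : dist (ρ' : UnitAddCircle) ((ρ + T : ℝ) : UnitAddCircle) + ‖w - g (ρ + T) x‖
      < δ (g (ρ + T) x)) :
    ∃ n : ℕ, t < n ∧ ‖ginv ρ' w - (g 1 ^ n) x‖ < ε ((g 1 ^ n) x) := by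
  -- `u` is the representative of `ρ + T` modulo `1` nearest to `ρ'`, and `ρ + T = u + n`
  set m := round (ρ' - (ρ + T))
  set u := ρ + T + m with hu_def
  have hcircle : dist (ρ' : UnitAddCircle) ((ρ + T : ℝ) : UnitAddCircle) = |ρ' - u| := by
    rw [dist_eq_norm, ← AddCircle.coe_sub, UnitAddCircle.norm_eq, sub_sub]
  have hu : |ρ' - u| ≤ 1 / 2 := by rw [hu_def, ← sub_sub]; exact abs_sub_round _
  have hu_mem := abs_le.1 hu
  have hm : 0 ≤ -m := by
    have : (m : ℝ) < 0 := by linarith [hρ.1, hρ'.2]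
    exact_mod_cast (neg_pos.2 this).le
  obtain ⟨n, hn⟩ := Int.eq_ofNat_of_zero_le hm
  have hnm : (n : ℝ) = -m := by exact_mod_cast hn.symm
  have hgρT : g (ρ + T) x = g u ((g 1 ^ n) x) := by
    rw [show ρ + T = u + n by rw [hnm, hu_def]; ring, hcoc]; rfl
  refine ⟨n, by linarith [hρ.1, hρ'.2], ?_⟩
  rw [hgρT, hcircle] at hstep
  have hw := norm_nonneg (w - g u ((g 1 ^ n) x))
  have := hδ (g u ((g 1 ^ n) x)) w u ρ' ⟨by linarith [hρ'.1], by linarith [hρ'.2]⟩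
    ⟨by linarith [hρ'.1], by linarith [hρ'.2]⟩ (by rw [Real.dist_eq]; linarith)
    (by rw [dist_eq_norm]; linarith [abs_nonneg (ρ' - u)])
  rwa [hleft, dist_eq_norm] at this

theorem chainRecurrent_of_chainRecurrent_skewProduct (hginv : Continuous ginv)
    (hcoc : ∀ u (n : ℕ), g (u + n) = g u * g 1 ^ n) (hleft : ∀ u x, ginv u (g u x) = x)
    (hright : ∀ u x, g u (ginv u x) = x)
    (hφ : ∀ (t s : ℝ) (x : F),
      φ t ((s : UnitAddCircle), x) = (((s + t : ℝ) : UnitAddCircle), g (t + s) (ginv s x)))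
    {s : ℝ} {y : F} (hp : ChainRecurrent (fun p q => dist p.1 q.1 + ‖p.2 - q.2‖) φ (fun r => r)
      ((s : UnitAddCircle), y)) :
    ChainRecurrent (fun x y => ‖x - y‖) (fun (n : ℕ) x => (g 1 ^ n) x) (fun n => (n : ℝ))
      (ginv s y) := by
  intro ε hε hε0 t ht
  obtain ⟨δ, hδc, hδ0, hδ⟩ :=
    (isCompact_Icc (a := s - 1) (b := s + 1)).exists_continuous_pos_forall_dist_lt
      (h := fun u x => ginv u x) (by fun_prop) hε hε0
  obtain ⟨k, ts, qs, h0, hlast, hts, hstep⟩ :=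
    hp (fun q => δ q.2) (by fun_prop) (fun q => hδ0 _) (t + 2) (by linarith)
  let ρ : Fin (k + 2) → ℝ := fun i => AddCircle.equivIco 1 (s - 1 / 2) (qs i).1
  have hρ_mem : ∀ i, ρ i ∈ Icc (s - 1 / 2) (s + 1 / 2) := fun i =>
    have h := (AddCircle.equivIco 1 (s - 1 / 2) (qs i).1).2
    ⟨h.1, by linarith [h.2]⟩
  have hρ_s : AddCircle.equivIco 1 (s - 1 / 2) (s : UnitAddCircle) = s := by
    rw [AddCircle.equivIco_coe_eq ⟨by linarith, by linarith⟩]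
  have hρ : ∀ i, ((ρ i : ℝ) : UnitAddCircle) = (qs i).1 := fun i =>
    (AddCircle.equivIco 1 (s - 1 / 2)).symm_apply_apply _
  have hq : ∀ i, qs i = ((ρ i : UnitAddCircle), g (ρ i) (ginv (ρ i) (qs i).2)) := fun i =>
    Prod.ext (hρ i).symm (hright _ _).symm
  have hlink : ∀ i : Fin (k + 1), ∃ n : ℕ, t < n ∧
      ‖ginv (ρ i.succ) (qs i.succ).2 - (g 1 ^ n) (ginv (ρ i.castSucc) (qs i.castSucc).2)‖ <
        ε ((g 1 ^ n) (ginv (ρ i.castSucc) (qs i.castSucc).2)) := by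
    intro i
    have := hstep i
    rw [hq i.castSucc, skewProduct_apply_coe_apply hleft hφ] at this
    beta_reduce at this
    rw [← hρ i.succ] at this
    exact exists_chain_step_of_skewProduct_step hcoc hleft (hρ_mem _) (hρ_mem _) ht.le
      (hts i) hδ this
  choose ns hns hstep' using hlink
  refine ⟨k, ns, fun i => ginv (ρ i) (qs i).2, ?_, ?_, hns, hstep'⟩ <;> simp [ρ, h0, hlast, hρ_s]

end SkewProduct

/-- The chain recurrent set of the skew-product flow `φᵗ` equals `S¹ ×_g R_c(g)`,
where `R_c(g)` is the chain recurrent set of the discrete-time flow generated by `g = g 1`. -/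
theorem chain_recurrent_set_skew_product
    {F : Type*} [NormedAddCommGroup F] [NormedSpace ℝ F] [CompleteSpace F]
    (X g ginv : ℝ → F →L[ℝ] F)
    (hX : Continuous X) (hXper : ∀ t, X (t + 1) = X t)
    (hg0 : g 0 = 1) (hg : ∀ t, HasDerivAt g (X t ∘L g t) t)
    (hinv : ∀ s, g s ∘L ginv s = 1 ∧ ginv s ∘L g s = 1)
    (φ : ℝ → UnitAddCircle × F → UnitAddCircle × F)
    (hφ : ∀ (t s : ℝ) (x : F),
      φ t ((s : UnitAddCircle), x) = (((s + t : ℝ) : UnitAddCircle), g (t + s) (ginv s x))) :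
    {p : UnitAddCircle × F | ∀ ε : UnitAddCircle × F → ℝ, Continuous ε → (∀ u, 0 < ε u) →
        ∀ t : ℝ, 0 < t →
          IsChainFrom (fun p q => dist p.1 q.1 + ‖p.2 - q.2‖) φ {r : ℝ | t < r} ε p p} =
      ⋃ s : ℝ, (fun y => ((s : UnitAddCircle), y)) ''
        (g s '' {x : F | ∀ ε : F → ℝ, Continuous ε → (∀ u, 0 < ε u) → ∀ t : ℝ, 0 < t →
          IsChainFrom (fun x y => ‖x - y‖) (fun (n : ℕ) (x : F) => (g 1 ^ n) x)
            {n : ℕ | t < (n : ℝ)} ε x x}) := by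
  have hgc : Continuous g := continuous_iff_continuousAt.2 fun t => (hg t).continuousAt
  have hginv : Continuous ginv := continuous_of_mul_eq_one hgc hinv
  have hleft : ∀ u x, ginv u (g u x) = x := fun u x => DFunLike.congr_fun (hinv u).2 x
  have hright : ∀ u x, g u (ginv u x) = x := fun u x => DFunLike.congr_fun (hinv u).1 x
  have hcoc : ∀ u (n : ℕ), g (u + n) = g u * g 1 ^ n := fun u n => by
    simpa using fundamental_solution_add_nat_mul hX hXper hg0 hg u n
  ext ⟨θ, y⟩
  induction θ using QuotientAddGroup.induction_on with | H s => ?_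
  simp only [mem_iUnion, mem_image]
  constructor
  · intro hp
    exact ⟨s, _, ⟨ginv s y, chainRecurrent_of_chainRecurrent_skewProduct hginv hcoc hleft
      hright hφ hp, rfl⟩, by rw [hright]⟩
  · rintro ⟨r, _, ⟨z, hz, rfl⟩, hrs⟩
    rw [← hrs]
    exact chainRecurrent_skewProduct_of_chainRecurrent hcoc hleft hφ hz r
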